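/- Let W = (W₁ ⊕ W₂) + W_int be a row-stochastic matrix with respect to a bipartition V = V₁ ∪ V₂, where |V₁| = m₁, |V₂| = m₂, N = m₁ + m₂. Let L_⊥ = (I - (1-α)W₁' - (1-α)W₂')⁻¹ and S = (I - (1-α)L_⊥ W_int')⁻¹. Let v_n = (α/m_n)(I_n - (1-α)W_n')⁻¹𝟏_n for n = 1,2. Then the influence vector satisfies v_W = S · ((m₁/N)v₁ ⊕ (m₂/N)v₂). -/

import Mathlib

open Matrix BigOperators

/-- The influence vector of an input-output matrix over an arbitrary finite index type. -/
noncomputable def influence {ι : Type*} [Fintype ι] [DecidableEq ι]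
    (α : ℝ) (W : Matrix ι ι ℝ) : ι → ℝ :=
  (α / (Fintype.card ι : ℝ)) • ((1 - (1 - α) • Wᵀ)⁻¹ *ᵥ fun _ => 1)

/-! With `A = 1 - (1-α)Wᵀ` and `D = 1 - (1-α)(W₁ ⊕ W₂)ᵀ` one has `A = D - (1-α)W_intᵀ`, so
`1 - (1-α)D⁻¹W_intᵀ = D⁻¹A` and `S = A⁻¹D`. As `D` is block diagonal,
`(m₁/N)v₁ ⊕ (m₂/N)v₂ = (α/N)D⁻¹𝟏`, hence `S` maps it to `(α/N)A⁻¹𝟏 = v_W`. The diagonal blocks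
of `D` are invertible by strict diagonal dominance, since `W₁, W₂` are nonnegative with row sums at
most `1` and `|1-α| < 1`. -/

open Finset

theorem sum_le_sum_fromBlocks_inl {ι κ ι' κ' : Type*} [Fintype ι'] [Fintype κ']
    {A : Matrix ι ι' ℝ} {B : Matrix ι κ' ℝ} {C : Matrix κ ι' ℝ} {D : Matrix κ κ' ℝ}
    (hB : ∀ i j, 0 ≤ B i j) (i : ι) :
    ∑ j, A i j ≤ ∑ j, fromBlocks A B C D (.inl i) j := by
  simpa [Fintype.sum_sum_type] using sum_nonneg fun j _ => hB i j

theorem sum_le_sum_fromBlocks_inr {ι κ ι' κ' : Type*} [Fintype ι'] [Fintype κ']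
    {A : Matrix ι ι' ℝ} {B : Matrix ι κ' ℝ} {C : Matrix κ ι' ℝ} {D : Matrix κ κ' ℝ}
    (hC : ∀ i j, 0 ≤ C i j) (i : κ) :
    ∑ j, D i j ≤ ∑ j, fromBlocks A B C D (.inr i) j := by
  simpa [Fintype.sum_sum_type] using sum_nonneg fun j _ => hC i j

theorem one_sub_smul_transpose_fromBlocks_diag {ι κ R : Type*} [DecidableEq ι] [DecidableEq κ]
    [CommRing R] (c : R) (A : Matrix ι ι R) (D : Matrix κ κ R) :
    1 - c • (fromBlocks A 0 0 D)ᵀ = fromBlocks (1 - c • Aᵀ) 0 0 (1 - c • Dᵀ) := by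
  simp [fromBlocks_transpose, fromBlocks_smul, ← fromBlocks_one, sub_eq_add_neg, fromBlocks_neg,
    fromBlocks_add]

section

variable {ι κ : Type*} [Fintype ι] [Fintype κ] [DecidableEq ι] [DecidableEq κ]

theorem isUnit_det_one_sub_smul_transpose {c : ℝ} (hc : |c| < 1) {W : Matrix ι ι ℝ}
    (hnn : ∀ i j, 0 ≤ W i j) (hrow : ∀ i, ∑ j, W i j ≤ 1) :
    IsUnit (1 - c • Wᵀ).det := by
  refine isUnit_iff_ne_zero.mpr (det_ne_zero_of_sum_col_lt_diag fun k => ?_)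
  have hoff : ∑ i ∈ univ.erase k, ‖(1 - c • Wᵀ) i k‖ = |c| * (∑ j, W k j - W k k) := by
    rw [← sum_erase_eq_sub (mem_univ k), mul_sum]
    refine sum_congr rfl fun i hi => ?_
    simp [one_apply_ne (ne_of_mem_erase hi), abs_of_nonneg (hnn k i)]
  have hrow_k : |c| * ∑ j, W k j ≤ |c| := mul_le_of_le_one_right (abs_nonneg c) (hrow k)
  calc ∑ i ∈ univ.erase k, ‖(1 - c • Wᵀ) i k‖
      = |c| * (∑ j, W k j - W k k) := hoff
    _ < 1 - |c * W k k| := by rw [abs_mul, abs_of_nonneg (hnn k k)]; linarith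
    _ ≤ |1 - c * W k k| := by simpa using abs_sub_abs_le_abs_sub 1 (c * W k k)
    _ = ‖(1 - c • Wᵀ) k k‖ := by simp

theorem inv_one_sub_smul_inv_mul_mulVec {R : Type*} [CommRing R] {D : Matrix ι ι R}
    (hD : IsUnit D.det) (c : R) (O : Matrix ι ι R) (v : ι → R) :
    (1 - c • (D⁻¹ * O))⁻¹ *ᵥ (D⁻¹ *ᵥ v) = (D - c • O)⁻¹ *ᵥ v := by
  have hfactor : 1 - c • (D⁻¹ * O) = D⁻¹ * (D - c • O) := by
    rw [Matrix.mul_sub, nonsing_inv_mul _ hD, Matrix.mul_smul]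
  rw [hfactor, Matrix.mul_inv_rev, nonsing_inv_nonsing_inv _ hD, mulVec_mulVec,
    mul_nonsing_inv_cancel_right _ _ hD]

theorem card_smul_influence (α : ℝ) (W : Matrix ι ι ℝ) :
    (Fintype.card ι : ℝ) • influence α W = α • ((1 - (1 - α) • Wᵀ)⁻¹ *ᵥ fun _ => 1) := by
  cases isEmpty_or_nonempty ι
  · exact Subsingleton.elim _ _
  · rw [influence, smul_smul, mul_div_cancel₀ _ (Nat.cast_ne_zero.mpr Fintype.card_ne_zero)]

theorem sum_elim_card_smul_influence {α : ℝ} {A : Matrix ι ι ℝ} {D : Matrix κ κ ℝ}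
    (hA : IsUnit (1 - (1 - α) • Aᵀ).det) (hD : IsUnit (1 - (1 - α) • Dᵀ).det) :
    Sum.elim ((Fintype.card ι : ℝ) • influence α A) ((Fintype.card κ : ℝ) • influence α D) =
      α • ((1 - (1 - α) • (fromBlocks A 0 0 D)ᵀ)⁻¹ *ᵥ fun _ => 1) := by
  rw [one_sub_smul_transpose_fromBlocks_diag, inv_fromBlocks_zero₂₁_of_isUnit_iff _ _ _
    (iff_of_true ((isUnit_iff_isUnit_det _).mpr hA) ((isUnit_iff_isUnit_det _).mpr hD))]
  ext (i | j) <;> simp [fromBlocks_mulVec, card_smul_influence, Function.comp_def]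

end

theorem influence_bipartition_general (m₁ m₂ : ℕ)
    (α : ℝ) (hα0 : 0 < α) (hα1 : α < 1)
    (W₁ : Matrix (Fin m₁) (Fin m₁) ℝ) (W₂ : Matrix (Fin m₂) (Fin m₂) ℝ)
    (B : Matrix (Fin m₁) (Fin m₂) ℝ) (C : Matrix (Fin m₂) (Fin m₁) ℝ)
    (hnn : ∀ i j, 0 ≤ Matrix.fromBlocks W₁ B C W₂ i j)
    (hrow : ∀ i, ∑ j, Matrix.fromBlocks W₁ B C W₂ i j = 1) :
    influence α (Matrix.fromBlocks W₁ B C W₂) =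
      (1 - (1 - α) • ((1 - (1 - α) • (Matrix.fromBlocks W₁ 0 0 W₂)ᵀ)⁻¹ *
          (Matrix.fromBlocks 0 B C 0)ᵀ))⁻¹ *ᵥ
        Sum.elim (fun i => ((m₁ : ℝ) / ((m₁ : ℝ) + (m₂ : ℝ))) * influence α W₁ i)
          (fun j => ((m₂ : ℝ) / ((m₁ : ℝ) + (m₂ : ℝ))) * influence α W₂ j) := by
  have hc : |1 - α| < 1 := abs_sub_lt_iff.mpr ⟨by linarith, by linarith⟩
  have hW₁ := isUnit_det_one_sub_smul_transpose (W := W₁) hc (fun i j => hnn (.inl i) (.inl j))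
    fun i => (sum_le_sum_fromBlocks_inl (fun i j => hnn (.inl i) (.inr j)) i).trans (hrow _).le
  have hW₂ := isUnit_det_one_sub_smul_transpose (W := W₂) hc (fun i j => hnn (.inr i) (.inr j))
    fun i => (sum_le_sum_fromBlocks_inr (fun i j => hnn (.inr i) (.inl j)) i).trans (hrow _).le
  have hdiag : IsUnit (1 - (1 - α) • (fromBlocks W₁ 0 0 W₂)ᵀ).det := by
    rw [one_sub_smul_transpose_fromBlocks_diag, det_fromBlocks_zero₂₁]
    exact hW₁.mul hW₂
  have hvec : Sum.elim (fun i => ((m₁ : ℝ) / ((m₁ : ℝ) + (m₂ : ℝ))) * influence α W₁ i)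
      (fun j => ((m₂ : ℝ) / ((m₁ : ℝ) + (m₂ : ℝ))) * influence α W₂ j) =
      ((m₁ + m₂ : ℝ)⁻¹ * α) • ((1 - (1 - α) • (fromBlocks W₁ 0 0 W₂)ᵀ)⁻¹ *ᵥ fun _ => 1) := by
    rw [mul_smul, ← sum_elim_card_smul_influence hW₁ hW₂]
    ext (i | j) <;> simp [div_eq_inv_mul, mul_assoc]
  have hsplit : fromBlocks W₁ B C W₂ = fromBlocks W₁ 0 0 W₂ + fromBlocks 0 B C 0 := by
    simp [fromBlocks_add]
  rw [hvec, mulVec_smul, inv_one_sub_smul_inv_mul_mulVec hdiag, influence, hsplit,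
    transpose_add, smul_add, sub_add_eq_sub_sub, Fintype.card_sum, Fintype.card_fin,
    Fintype.card_fin, Nat.cast_add, div_eq_inv_mul]

/-- Bipartition decomposition of the influence vector: with
`W = (W₁ ⊕ W₂) + W_int`, `L_⊥ = (I - (1-α)W₁' - (1-α)W₂')⁻¹` and the interaction
matrix `S = (I - (1-α)L_⊥ W_int')⁻¹`, one has
`v_W = S ((m₁/N) v₁ ⊕ (m₂/N) v₂)`. -/
theorem influence_bipartition (m₁ m₂ : ℕ) (hm₁ : 0 < m₁) (hm₂ : 0 < m₂)
    (α : ℝ) (hα0 : 0 < α) (hα1 : α < 1)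
    (W₁ : Matrix (Fin m₁) (Fin m₁) ℝ) (W₂ : Matrix (Fin m₂) (Fin m₂) ℝ)
    (B : Matrix (Fin m₁) (Fin m₂) ℝ) (C : Matrix (Fin m₂) (Fin m₁) ℝ)
    (hnn : ∀ i j, 0 ≤ Matrix.fromBlocks W₁ B C W₂ i j)
    (hrow : ∀ i, ∑ j, Matrix.fromBlocks W₁ B C W₂ i j = 1) :
    influence α (Matrix.fromBlocks W₁ B C W₂) =
      (1 - (1 - α) • ((1 - (1 - α) • (Matrix.fromBlocks W₁ 0 0 W₂)ᵀ)⁻¹ *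
          (Matrix.fromBlocks 0 B C 0)ᵀ))⁻¹ *ᵥ
        Sum.elim (fun i => ((m₁ : ℝ) / ((m₁ : ℝ) + (m₂ : ℝ))) * influence α W₁ i)
          (fun j => ((m₂ : ℝ) / ((m₁ : ℝ) + (m₂ : ℝ))) * influence α W₂ j) :=
  influence_bipartition_general m₁ m₂ α hα0 hα1 W₁ W₂ B C hnn hrow
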